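/- arXiv:2410.08147 — 7 statements merged into one kernel-verified Lean document; each statement's English description precedes it below -/
import Mathlib

section
/- For the NDBWSHCCM vector field f on ℝ³ given by f(X,Z,V) = (V, A(V − π₂|Z|^{n−1}Z|V| − π₃|Z|ⁿV), −α|X|^{p−1}X − α_c|Z|^{p−1}Z − π₁|X|^p V), and the Lyapunov function 𝒱(X,Z,V) = (α/(p+1))|X|^{p+1} + (α_c/((p+1)A))|Z|^{p+1} + V²/2, the derivative of 𝒱 along f satisfies ⟨∇𝒱(𝐗), f(𝐗)⟩ = −π₁|X|^p V² − α_c|Z|^{p+n−1}(π₂|Z||V| + π₃ZV) ≤ 0 for all 𝐗 ∈ ℝ³. -/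
lemma sq_rpow_eq' (x e : ℝ) : (x * x) ^ e = |x| ^ (2 * e) := by
  rw [← abs_mul_abs_self, ← sq, ← Real.rpow_natCast |x| 2, ← Real.rpow_mul (abs_nonneg x)]
  norm_num

lemma myHasDerivAt_abs_rpow {p : ℝ} (hp : 1 ≤ p) (x : ℝ) :
    HasDerivAt (fun x : ℝ => |x| ^ (p + 1)) ((p + 1) * |x| ^ (p - 1) * x) x := by
  have h2 : HasDerivAt (fun x : ℝ => x * x) (2 * x) x := by
    simpa [two_mul] using (hasDerivAt_id' x).fun_mul (hasDerivAt_id' x)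
  have hr : HasDerivAt (fun y : ℝ => y ^ ((p+1)/2)) (((p+1)/2) * (x * x) ^ ((p+1)/2 - 1)) (x * x) :=
    Real.hasDerivAt_rpow_const (Or.inr (by linarith))
  have h3 := HasDerivAt.comp (h := fun x : ℝ => x * x) x hr h2
  have heq : ((fun y : ℝ => y ^ ((p+1)/2)) ∘ (fun x : ℝ => x * x)) = fun x : ℝ => |x| ^ (p + 1) := by
    funext y
    simp only [Function.comp, sq_rpow_eq']
    ring_nf
  rw [heq] at h3
  refine h3.congr_deriv ?_
  rw [sq_rpow_eq']
  have h4 : 2 * ((p + 1) / 2 - 1) = p - 1 := by ring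
  rw [h4]; ring

/-- The derivative of the Lyapunov function `𝒱` along the NDBWSHCCM vector field `f`
equals `−π₁|X|^p V² − α_c|Z|^{p+n−1}(π₂|Z||V| + π₃ZV)` and is nonpositive. -/
theorem stmt_4 (π₁ π₂ π₃ n p A α : ℝ)
    (hπ₁ : 0 ≤ π₁) (hπ₂ : 0 ≤ π₂) (hπ₃₁ : -π₂ ≤ π₃) (hπ₃₂ : π₃ ≤ π₂)
    (hn : 1 ≤ n) (hp : 1 ≤ p) (hA : 0 < A) (hα₀ : 0 < α) (hα₁ : α < 1) :
    ∀ X Z V : ℝ,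
      (fderiv ℝ (fun q : ℝ × ℝ × ℝ =>
          α / (p + 1) * |q.1| ^ (p + 1) + (1 - α) / ((p + 1) * A) * |q.2.1| ^ (p + 1)
            + q.2.2 ^ (2 : ℕ) / 2) (X, Z, V))
        (V, A * (V - π₂ * |Z| ^ (n - 1) * Z * |V| - π₃ * |Z| ^ n * V),
          -α * |X| ^ (p - 1) * X - (1 - α) * |Z| ^ (p - 1) * Z - π₁ * |X| ^ p * V)
        = -π₁ * |X| ^ p * V ^ (2 : ℕ)
            - (1 - α) * |Z| ^ (p + n - 1) * (π₂ * |Z| * |V| + π₃ * Z * V) ∧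
      -π₁ * |X| ^ p * V ^ (2 : ℕ)
          - (1 - α) * |Z| ^ (p + n - 1) * (π₂ * |Z| * |V| + π₃ * Z * V) ≤ 0 := by
  intro X Z V
  constructor
  · -- compute the fderiv
    set pt : ℝ × ℝ × ℝ := (X, Z, V)
    have hX : HasFDerivAt (fun q : ℝ × ℝ × ℝ => |q.1| ^ (p+1))
        (((p + 1) * |X| ^ (p - 1) * X) • (ContinuousLinearMap.fst ℝ ℝ (ℝ × ℝ))) pt :=
      (myHasDerivAt_abs_rpow hp X).comp_hasFDerivAt (f := fun q : ℝ × ℝ × ℝ => q.1) pt hasFDerivAt_fst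
    have hsnd1 : HasFDerivAt (fun q : ℝ × ℝ × ℝ => q.2.1)
        ((ContinuousLinearMap.fst ℝ ℝ ℝ).comp (ContinuousLinearMap.snd ℝ ℝ (ℝ × ℝ))) pt :=
      hasFDerivAt_fst.comp pt hasFDerivAt_snd
    have hsnd2 : HasFDerivAt (fun q : ℝ × ℝ × ℝ => q.2.2)
        ((ContinuousLinearMap.snd ℝ ℝ ℝ).comp (ContinuousLinearMap.snd ℝ ℝ (ℝ × ℝ))) pt :=
      hasFDerivAt_snd.comp pt hasFDerivAt_snd
    have hZ : HasFDerivAt (fun q : ℝ × ℝ × ℝ => |q.2.1| ^ (p+1))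
        (((p + 1) * |Z| ^ (p - 1) * Z) •
          ((ContinuousLinearMap.fst ℝ ℝ ℝ).comp (ContinuousLinearMap.snd ℝ ℝ (ℝ × ℝ)))) pt :=
      (myHasDerivAt_abs_rpow hp Z).comp_hasFDerivAt (h₂ := fun x : ℝ => |x| ^ (p + 1)) pt hsnd1
    have hVd : HasDerivAt (fun v : ℝ => v ^ (2:ℕ) / 2) V V := by
      have := (hasDerivAt_pow 2 V).div_const 2
      simpa using this
    have hV : HasFDerivAt (fun q : ℝ × ℝ × ℝ => q.2.2 ^ (2:ℕ) / 2)
        (V • ((ContinuousLinearMap.snd ℝ ℝ ℝ).comp (ContinuousLinearMap.snd ℝ ℝ (ℝ × ℝ)))) pt :=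
      hVd.comp_hasFDerivAt (h₂ := fun v : ℝ => v ^ (2:ℕ) / 2) pt hsnd2
    have H := ((hX.const_mul (α / (p+1))).fun_add (hZ.const_mul ((1-α)/((p+1)*A)))).fun_add hV
    rw [H.fderiv]
    simp only [ContinuousLinearMap.add_apply, ContinuousLinearMap.smul_apply,
      ContinuousLinearMap.coe_comp', ContinuousLinearMap.coe_fst', ContinuousLinearMap.coe_snd',
      Function.comp_apply, smul_eq_mul]
    -- now a scalar identity
    have habsZ : (0:ℝ) ≤ |Z| := abs_nonneg Z
    have hp1 : p + 1 ≠ 0 := by positivity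
    have c1 : α / (p+1) * ((p + 1) * |X| ^ (p - 1) * X) = α * (|X| ^ (p-1) * X) := by
      field_simp
    have c2 : (1-α) / ((p+1)*A) * ((p + 1) * |Z| ^ (p - 1) * Z) * A
        = (1-α) * (|Z| ^ (p-1) * Z) := by
      field_simp
    have e1 : |Z| ^ (p-1) * Z * (|Z| ^ (n-1) * Z) = |Z| ^ (p+n-1) * |Z| := by
      rcases eq_or_ne Z 0 with h | h
      · simp [h, Real.zero_rpow (show p + n - 1 ≠ 0 from ne_of_gt (by linarith))]
      · have habs : (0:ℝ) < |Z| := abs_pos.2 h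
        have r1 : |Z| ^ (p+n-1) * |Z| = |Z| ^ (p+n) := by
          rw [← Real.rpow_add_one habs.ne' (p+n-1)]
          norm_num
        rw [r1, show |Z| ^ (p-1) * Z * (|Z| ^ (n-1) * Z)
            = |Z| ^ (p-1) * |Z| ^ (n-1) * (Z * Z) from by ring, ← abs_mul_abs_self,
          ← Real.rpow_add habs (p-1) (n-1),
          show |Z| * |Z| = |Z| ^ (1+1:ℝ) from by rw [Real.rpow_add habs, Real.rpow_one],
          ← Real.rpow_add habs]
        congr 1; ring
    have e2 : |Z| ^ (p-1) * Z * |Z| ^ n = |Z| ^ (p+n-1) * Z := by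
      rcases eq_or_ne Z 0 with h | h
      · simp [h]
      · have habs : (0:ℝ) < |Z| := abs_pos.2 h
        have : |Z| ^ (p-1) * |Z| ^ n = |Z| ^ (p+n-1) := by
          rw [← Real.rpow_add habs]; ring_nf
        linear_combination Z * this
    linear_combination V * c1
      + (V - π₂ * |Z| ^ (n-1) * Z * |V| - π₃ * |Z| ^ n * V) * c2
      - (1-α) * π₂ * |V| * e1 - (1-α) * π₃ * V * e2
  · -- nonpositivity
    have h1 : 0 ≤ π₁ * |X| ^ p * V ^ (2:ℕ) := by positivity
    have hZ3 : |π₃| ≤ π₂ := abs_le.mpr ⟨hπ₃₁, hπ₃₂⟩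
    have h2 : 0 ≤ π₂ * |Z| * |V| + π₃ * Z * V := by
      have habs : |π₃ * Z * V| ≤ π₂ * |Z| * |V| := by
        rw [abs_mul, abs_mul]
        gcongr
      have := neg_abs_le (π₃ * Z * V)
      linarith
    have h3 : 0 ≤ (1-α) * |Z| ^ (p+n-1) * (π₂ * |Z| * |V| + π₃ * Z * V) := by
      apply mul_nonneg
      apply mul_nonneg (by linarith) (Real.rpow_nonneg (abs_nonneg Z) _)
      exact h2
    linarith
end

section
/- A point (X, Z, V) ∈ ℝ³ is an equilibrium point of the NDBWSHCCM vector field f (i.e., f(X,Z,V)=0) if and only if V = 0 and Z = −(α/α_c)^{1/p} X. In other words, the equilibrium set of f equals ℰ = { (X, −(α/α_c)^{1/p} X, 0) : X ∈ ℝ }. -/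
lemma habs_pow (p : ℝ) (hp : 1 ≤ p) (t : ℝ) : abs (|t| ^ (p - 1) * t) = |t| ^ p := by
  rcases eq_or_ne t 0 with h | h
  · simp [h, Real.zero_rpow (by linarith : p ≠ 0)]
  · rw [abs_mul, abs_of_nonneg (Real.rpow_nonneg (abs_nonneg t) _),
      ← Real.rpow_add_one (abs_ne_zero.mpr h)]
    ring_nf

lemma signed_pow_inj (p : ℝ) (hp : 1 ≤ p) {a b : ℝ}
    (h : |a| ^ (p - 1) * a = |b| ^ (p - 1) * b) : a = b := by
  have hp0 : (0:ℝ) < p := by linarith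
  have habs : |a| = |b| := by
    have h1 : |a| ^ p = |b| ^ p := by
      rw [← habs_pow p hp a, ← habs_pow p hp b, h]
    by_contra hne
    rcases lt_or_gt_of_ne hne with hlt | hlt
    · exact absurd h1 (ne_of_lt (Real.rpow_lt_rpow (abs_nonneg a) hlt hp0))
    · exact absurd h1.symm (ne_of_lt (Real.rpow_lt_rpow (abs_nonneg b) hlt hp0))
  rcases abs_eq_abs.mp habs with heq | heq
  · exact heq
  · rcases eq_or_ne a 0 with h0 | h0
    · rw [h0] at heq ⊢; linarith
    · have hpos : 0 < |a| ^ (p - 1) := Real.rpow_pos_of_pos (abs_pos.mpr h0) _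
      have hb : b = -a := by linarith
      rw [hb, abs_neg] at h
      have : a = -a := mul_left_cancel₀ (ne_of_gt hpos) h
      linarith

/-- Equilibrium points of the NDBWSHCCM: `f(X,Z,V) = 0` iff `V = 0` and
`Z = −(α/α_c)^{1/p} X`. -/
theorem stmt_8 (π₁ π₂ π₃ n p A α : ℝ)
    (hπ₁ : 0 ≤ π₁) (hπ₂ : 0 ≤ π₂) (hπ₃₁ : -π₂ ≤ π₃) (hπ₃₂ : π₃ ≤ π₂)
    (hn : 1 ≤ n) (hp : 1 ≤ p) (hA : 0 < A) (hα₀ : 0 < α) (hα₁ : α < 1) :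
    ∀ X Z V : ℝ,
      (V = 0 ∧ A * (V - π₂ * |Z| ^ (n - 1) * Z * |V| - π₃ * |Z| ^ n * V) = 0 ∧
        -α * |X| ^ (p - 1) * X - (1 - α) * |Z| ^ (p - 1) * Z - π₁ * |X| ^ p * V = 0) ↔
      (V = 0 ∧ Z = -(α / (1 - α)) ^ ((1 : ℝ) / p) * X) := by
  intro X Z V
  set c : ℝ := (α / (1 - α)) ^ ((1 : ℝ) / p) with hc
  have h1α : 0 < 1 - α := by linarith
  have hrpos : 0 < α / (1 - α) := div_pos hα₀ h1α
  have hcpos : 0 < c := Real.rpow_pos_of_pos hrpos _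
  have hp0 : (0:ℝ) < p := by linarith
  have hcp : c ^ p = α / (1 - α) := by
    rw [hc, ← Real.rpow_mul hrpos.le, one_div_mul_cancel (ne_of_gt hp0), Real.rpow_one]
  have hcp' : (1 - α) * c ^ p = α := by
    rw [hcp]; field_simp
  have h2 : c ^ (p - 1) * c = c ^ p := by
    rw [← Real.rpow_add_one (ne_of_gt hcpos)]; ring_nf
  have hkey : (1 - α) * (|(-c * X)| ^ (p - 1) * (-c * X)) = -α * (|X| ^ (p - 1) * X) := by
    have h1 : |(-c * X)| = c * |X| := by
      rw [abs_mul, abs_neg, abs_of_pos hcpos]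
    rw [h1, Real.mul_rpow hcpos.le (abs_nonneg X)]
    linear_combination (-((1 - α) * (|X| ^ (p - 1) * X))) * h2 + (-(|X| ^ (p - 1) * X)) * hcp'
  constructor
  · rintro ⟨hV, _, h3⟩
    refine ⟨hV, ?_⟩
    subst hV
    have h3' : (1 - α) * (|Z| ^ (p - 1) * Z) = -α * (|X| ^ (p - 1) * X) := by
      linear_combination -h3
    have : (1 - α) * (|Z| ^ (p - 1) * Z) = (1 - α) * (|(-c * X)| ^ (p - 1) * (-c * X)) := by
      rw [h3', hkey]
    exact signed_pow_inj p hp (mul_left_cancel₀ (ne_of_gt h1α) this)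
  · rintro ⟨hV, hZ⟩
    subst hV; subst hZ
    refine ⟨rfl, by simp, ?_⟩
    linear_combination -hkey
end

section
/- Under the parameter assumptions π₁ > 0, π₂ > 0, π₃ ∈ (−π₂, π₂), n, p ≥ 1, A > 0, α ∈ (0,1), α_c = 1−α, the zero set of the Lyapunov derivative 𝒱̇(X,Z,V) = −π₁|X|^p V² − α_c|Z|^{p+n−1}(π₂|Z||V| + π₃ZV) equals 𝒰₁ ∪ 𝒰₂, where 𝒰₁ = {(0,0,V) : V ∈ ℝ} and 𝒰₂ = {(X,Z,0) : X,Z ∈ ℝ}. -/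
/-- Zero set of the NDBWSHCCM Lyapunov derivative: under `π₁, π₂ > 0`,
`π₃ ∈ (−π₂, π₂)`, one has `𝒱̇(X,Z,V) = 0` iff `(X,Z,V) ∈ 𝒰₁ ∪ 𝒰₂`,
i.e. iff `X = Z = 0` or `V = 0`. -/
theorem stmt_10 (π₁ π₂ π₃ n p A α : ℝ)
    (hπ₁ : 0 < π₁) (hπ₂ : 0 < π₂) (hπ₃₁ : -π₂ < π₃) (hπ₃₂ : π₃ < π₂)
    (hn : 1 ≤ n) (hp : 1 ≤ p) (hA : 0 < A) (hα₀ : 0 < α) (hα₁ : α < 1) :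
    ∀ X Z V : ℝ,
      (-π₁ * |X| ^ p * V ^ (2 : ℕ)
          - (1 - α) * |Z| ^ (p + n - 1) * (π₂ * |Z| * |V| + π₃ * Z * V) = 0) ↔
        ((X = 0 ∧ Z = 0) ∨ V = 0) := by
  intro X Z V
  have hac : 0 < 1 - α := by linarith
  constructor
  · intro h
    by_cases hV : V = 0
    · right; exact hV
    left
    have hV2 : 0 < V ^ (2:ℕ) := by positivity
    have habsV : 0 < |V| := abs_pos.mpr hV
    have hπ₃' : |π₃| < π₂ := abs_lt.mpr ⟨hπ₃₁, hπ₃₂⟩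
    have hXp : 0 ≤ |X| ^ p := Real.rpow_nonneg (abs_nonneg X) p
    have hZp : 0 ≤ |Z| ^ (p + n - 1) := Real.rpow_nonneg (abs_nonneg Z) _
    have hkey : 0 ≤ π₂ * |Z| * |V| + π₃ * Z * V := by
      have h1 : |π₃ * Z * V| ≤ π₂ * |Z| * |V| := by
        rw [abs_mul, abs_mul]
        exact mul_le_mul_of_nonneg_right
          (mul_le_mul_of_nonneg_right hπ₃'.le (abs_nonneg Z)) (abs_nonneg V)
      linarith [neg_abs_le (π₃ * Z * V)]
    have h1 : 0 ≤ π₁ * |X| ^ p * V ^ (2:ℕ) := by positivity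
    have h2 : 0 ≤ (1 - α) * |Z| ^ (p + n - 1) * (π₂ * |Z| * |V| + π₃ * Z * V) := by
      positivity
    have hz1 : π₁ * |X| ^ p * V ^ (2:ℕ) = 0 := by nlinarith
    have hz2 : (1 - α) * |Z| ^ (p + n - 1) * (π₂ * |Z| * |V| + π₃ * Z * V) = 0 := by
      nlinarith
    constructor
    · have hXp0 : |X| ^ p = 0 := by
        by_contra hne
        have : 0 < |X| ^ p := lt_of_le_of_ne hXp (Ne.symm hne)
        nlinarith [mul_pos (mul_pos hπ₁ this) hV2]
      have := (Real.rpow_eq_zero (abs_nonneg X) (by linarith : p ≠ 0)).mp hXp0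
      exact abs_eq_zero.mp this
    · by_contra hZ
      have habsZ : 0 < |Z| := abs_pos.mpr hZ
      have hZp' : 0 < |Z| ^ (p + n - 1) := Real.rpow_pos_of_pos habsZ _
      have hinner : 0 < π₂ * |Z| * |V| + π₃ * Z * V := by
        have h1 : |π₃ * Z * V| ≤ |π₃| * |Z| * |V| := by
          rw [abs_mul, abs_mul]
        nlinarith [neg_abs_le (π₃ * Z * V),
          mul_pos (mul_pos (sub_pos.mpr hπ₃') habsZ) habsV]
      nlinarith [mul_pos (mul_pos hac hZp') hinner]
  · rintro (⟨hX, hZ⟩ | hV)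
    · subst hX; subst hZ
      simp [Real.zero_rpow (show p ≠ 0 by linarith),
        Real.zero_rpow (show p + n - 1 ≠ 0 by linarith)]
    · subst hV
      simp
end

section
/- If 𝐗 : ℝ_{≥0} → ℝ³ is a solution of the NDBWSHCCM (with π₁, π₂ > 0, π₃ ∈ (−π₂,π₂)) whose entire positive orbit lies in 𝒰₂ = {(X,Z,0)}, i.e., V(t)=0 for all t ≥ 0, then 𝐗(t) ∈ ℰ for all t ≥ 0, i.e., Z(t) = −(α/α_c)^{1/p}X(t) for all t. -/
open Set

lemma g_pos {p : ℝ} (hp : 0 < p) {y : ℝ} (hy : 0 < y) : 0 < |y| ^ (p - 1) * y :=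
  mul_pos (Real.rpow_pos_of_pos (abs_pos.mpr hy.ne') _) hy

lemma g_inj {p : ℝ} (hp : 0 < p) : Function.Injective (fun y : ℝ => |y| ^ (p - 1) * y) := by
  have key : ∀ u v : ℝ, 0 < u → 0 < v → |u| ^ (p-1) * u = |v| ^ (p-1) * v → u = v := by
    intro u v hu hv h
    rw [abs_of_pos hu, abs_of_pos hv] at h
    have hu' : u ^ (p - 1) * u = u ^ p := by
      rw [Real.rpow_sub hu, Real.rpow_one]; field_simp
    have hv' : v ^ (p - 1) * v = v ^ p := by
      rw [Real.rpow_sub hv, Real.rpow_one]; field_simp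
    have hpp : u ^ p = v ^ p := by rw [← hu', ← hv']; exact h
    rcases lt_trichotomy u v with h' | h' | h'
    · exact absurd hpp (ne_of_lt (Real.rpow_lt_rpow hu.le h' hp))
    · exact h'
    · exact absurd hpp.symm (ne_of_lt (Real.rpow_lt_rpow hv.le h' hp))
  have gzero : ∀ v : ℝ, |v| ^ (p-1) * v = 0 → v = 0 := by
    intro v hv
    by_contra hv0
    rcases lt_or_gt_of_ne hv0 with h | h
    · have := g_pos hp (neg_pos.mpr h)
      rw [abs_neg] at this; nlinarith
    · nlinarith [g_pos hp h]
  intro u v h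
  simp only at h
  rcases lt_trichotomy u 0 with hu | hu | hu <;> rcases lt_trichotomy v 0 with hv | hv | hv
  · have := key (-u) (-v) (by linarith) (by linarith) (by
      simpa [abs_neg] using congrArg Neg.neg h)
    linarith
  · exfalso; subst hv
    exact hu.ne (gzero u (by simpa using h))
  · exfalso
    have h1 := g_pos hp (neg_pos.mpr hu)
    rw [abs_neg] at h1
    nlinarith [g_pos hp hv]
  · subst hu
    exact (gzero v (by simpa using h.symm)).symm
  · rw [hu, hv]
  · subst hu
    exact (gzero v (by simpa using h.symm)).symm
  · exfalso
    have h2 := g_pos hp (neg_pos.mpr hv)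
    rw [abs_neg] at h2
    nlinarith [g_pos hp hu]
  · exfalso; subst hv
    exact hu.ne' (gzero u (by simpa using h))
  · exact key u v hu hv h

/-- If a solution of the NDBWSHCCM on `ℝ_{≥0}` has `V(t) = 0` for all `t ≥ 0`
(its positive orbit lies in `𝒰₂`), then it lies in the equilibrium set `ℰ`:
`Z(t) = −(α/α_c)^{1/p} X(t)` for all `t ≥ 0`. -/
theorem stmt_13 (π₁ π₂ π₃ n p A α : ℝ)
    (hπ₁ : 0 < π₁) (hπ₂ : 0 < π₂) (hπ₃₁ : -π₂ < π₃) (hπ₃₂ : π₃ < π₂)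
    (hn : 1 ≤ n) (hp : 1 ≤ p) (hA : 0 < A) (hα₀ : 0 < α) (hα₁ : α < 1)
    (x : ℝ → ℝ × ℝ × ℝ)
    (hsol : ∀ t ∈ Ici (0 : ℝ), HasDerivWithinAt x
      ((x t).2.2,
        A * ((x t).2.2 - π₂ * |(x t).2.1| ^ (n - 1) * (x t).2.1 * |(x t).2.2|
          - π₃ * |(x t).2.1| ^ n * (x t).2.2),
        -α * |(x t).1| ^ (p - 1) * (x t).1 - (1 - α) * |(x t).2.1| ^ (p - 1) * (x t).2.1
          - π₁ * |(x t).1| ^ p * (x t).2.2) (Ici 0) t)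
    (hV : ∀ t ∈ Ici (0 : ℝ), (x t).2.2 = 0) :
    ∀ t ∈ Ici (0 : ℝ), (x t).2.1 = -(α / (1 - α)) ^ ((1 : ℝ) / p) * (x t).1 := by
  intro t ht
  have hp0 : (0 : ℝ) < p := lt_of_lt_of_le one_pos hp
  have hαc : (0 : ℝ) < 1 - α := by linarith
  -- derivative of V component
  have hVd := ((hsol t ht).hasFDerivWithinAt.snd.snd).hasDerivWithinAt
  simp only [ContinuousLinearMap.coe_comp', Function.comp_apply,
    ContinuousLinearMap.smulRight_apply, ContinuousLinearMap.one_apply, one_smul,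
    ContinuousLinearMap.coe_snd', ContinuousLinearMap.toSpanSingleton_apply] at hVd
  have hV0 : HasDerivWithinAt (fun s => (x s).2.2) 0 (Ici 0) t :=
    (hasDerivWithinAt_const t (Ici (0:ℝ)) (0:ℝ)).congr (fun s hs => hV s hs) (hV t ht)
  have huniq := (uniqueDiffOn_Ici 0 t ht).eq_deriv _ hVd hV0
  rw [hV t ht] at huniq
  -- the algebraic equation
  have heq : |(x t).2.1| ^ (p - 1) * (x t).2.1
      = -(α / (1 - α)) * (|(x t).1| ^ (p - 1) * (x t).1) := by
    field_simp at huniq ⊢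
    nlinarith [huniq]
  -- compute g at the candidate value
  set c : ℝ := (α / (1 - α)) ^ ((1 : ℝ) / p) with hc
  have hcpos : 0 < c := Real.rpow_pos_of_pos (div_pos hα₀ hαc) _
  have hcp : c ^ (p - 1) * c = α / (1 - α) := by
    rw [← Real.rpow_add_one hcpos.ne', sub_add_cancel, hc,
      ← Real.rpow_mul (div_pos hα₀ hαc).le, one_div, inv_mul_cancel₀ hp0.ne', Real.rpow_one]
  have hgc : |(-c * (x t).1)| ^ (p - 1) * (-c * (x t).1)
      = -(α / (1 - α)) * (|(x t).1| ^ (p - 1) * (x t).1) := by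
    have habs : |(-c * (x t).1)| = c * |(x t).1| := by
      rw [abs_mul, abs_neg, abs_of_pos hcpos]
    rw [habs, Real.mul_rpow hcpos.le (abs_nonneg _), ← hcp]
    ring
  exact g_inj hp0 (heq.trans hgc.symm)
end

section
/- Suppose V : ℝⁿ → ℝ is continuously differentiable, radially unbounded, positive definite, and its derivative along a locally Lipschitz vector field f satisfies ⟨∇V(x), f(x)⟩ ≤ 0 for all x. Then every maximal solution of ẋ = f(x) forward in time exists on [0, +∞) and is bounded, with V(x(t)) ≤ V(x(0)) for all t ≥ 0. -/
open Filter Set Metric Topology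

/-- V is nonincreasing along solutions on a convex time set. -/
theorem lyap_le {n : ℕ} {f : EuclideanSpace ℝ (Fin n) → EuclideanSpace ℝ (Fin n)}
    {V : EuclideanSpace ℝ (Fin n) → ℝ} (hV : ContDiff ℝ 1 V)
    (hdec : ∀ x, fderiv ℝ V x (f x) ≤ 0)
    {s : Set ℝ} (hs : Convex ℝ s) {x : ℝ → EuclideanSpace ℝ (Fin n)}
    (hx : ∀ t ∈ s, HasDerivWithinAt x (f (x t)) s t) :
    AntitoneOn (fun t => V (x t)) s := by
  have hVd : Differentiable ℝ V := hV.differentiable one_ne_zero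
  have key : ∀ t ∈ interior s,
      HasDerivAt (fun t => V (x t)) (fderiv ℝ V (x t) (f (x t))) t := by
    intro t ht
    have hmem : s ∈ 𝓝 t := mem_interior_iff_mem_nhds.1 ht
    have h1 : HasDerivAt x (f (x t)) t := (hx t (interior_subset ht)).hasDerivAt hmem
    exact (hVd (x t)).hasFDerivAt.comp_hasDerivAt t h1
  apply antitoneOn_of_deriv_nonpos hs
  · exact hV.continuous.comp_continuousOn (fun t ht => (hx t ht).continuousWithinAt)
  · exact fun t ht => ((key t ht).differentiableAt).differentiableWithinAt
  · intro t ht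
    rw [(key t ht).deriv]
    exact hdec (x t)

theorem sublevel_bound {n : ℕ} {V : EuclideanSpace ℝ (Fin n) → ℝ}
    (hrad : Tendsto V (comap (fun x : EuclideanSpace ℝ (Fin n) => ‖x‖) atTop) atTop)
    (c : ℝ) : ∃ R : ℝ, ∀ y, V y ≤ c → ‖y‖ ≤ R := by
  have h : ∀ᶠ y in comap (fun x : EuclideanSpace ℝ (Fin n) => ‖x‖) atTop, c < V y :=
    hrad.eventually (eventually_gt_atTop c)
  rw [eventually_comap] at h
  obtain ⟨R, hR⟩ := eventually_atTop.1 h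
  refine ⟨R, fun y hy => ?_⟩
  by_contra hcon
  exact absurd hy (not_le.2 (hR ‖y‖ (le_of_not_ge hcon) y rfl))

theorem lipOn_weaken {α β : Type*} [PseudoEMetricSpace α] [PseudoEMetricSpace β]
    {f : α → β} {s : Set α} {K K' : NNReal} (h : LipschitzOnWith K f s) (hK : K ≤ K') :
    LipschitzOnWith K' f s := fun x hx y hy =>
  (h hx hy).trans (by gcongr)

theorem unif_lip {n : ℕ} {f : EuclideanSpace ℝ (Fin n) → EuclideanSpace ℝ (Fin n)}
    (hf : LocallyLipschitz f) {K : Set (EuclideanSpace ℝ (Fin n))} (hK : IsCompact K) :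
    ∃ ρ > (0:ℝ), ∃ L : NNReal, ∀ q ∈ K, LipschitzOnWith L f (closedBall q ρ) := by
  rcases K.eq_empty_or_nonempty with h | hne
  · exact ⟨1, one_pos, 0, by simp [h]⟩
  have hdata : ∀ p : EuclideanSpace ℝ (Fin n),
      ∃ r, 0 < r ∧ ∃ L : NNReal, LipschitzOnWith L f (ball p r) := by
    intro p
    obtain ⟨L, t, ht, hL⟩ := hf p
    obtain ⟨r, hr, hball⟩ := Metric.mem_nhds_iff.1 ht
    exact ⟨r, hr, L, hL.mono hball⟩
  choose r hr L hL using fun p => hdata p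
  obtain ⟨s, hsK, hscover⟩ := hK.elim_nhds_subcover (fun p => ball p (r p / 2))
    (fun p _ => ball_mem_nhds p (by linarith [hr p]))
  have hsne : s.Nonempty := by
    obtain ⟨q, hq⟩ := hne
    obtain ⟨p, hp, _⟩ := mem_iUnion₂.1 (hscover hq)
    exact ⟨p, hp⟩
  refine ⟨s.inf' hsne (fun p => r p) / 4, ?_, s.sup (fun p => L p), ?_⟩
  · have : ∀ p ∈ s, 0 < r p := fun p _ => hr p
    have h2 : 0 < s.inf' hsne (fun p => r p) := (Finset.lt_inf'_iff hsne).2 this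
    linarith
  · intro q hq
    obtain ⟨p, hp, hqp⟩ := mem_iUnion₂.1 (hscover hq)
    have hinf : s.inf' hsne (fun p => r p) ≤ r p := Finset.inf'_le _ hp
    have hsub : closedBall q (s.inf' hsne (fun p => r p) / 4) ⊆ ball p (r p) := by
      intro y hy
      have h1 : dist y q ≤ s.inf' hsne (fun p => r p) / 4 := mem_closedBall.1 hy
      have h2 : dist q p < r p / 2 := mem_ball.1 hqp
      have := dist_triangle y q p
      have hrp := hr p
      simp only [mem_ball]
      linarith
    exact lipOn_weaken ((hL p).mono hsub) (Finset.le_sup hp)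

/-- Lyapunov global existence and boundedness: if `V` is `C¹`, positive definite,
radially unbounded, and `⟨∇V(x), f(x)⟩ ≤ 0` everywhere for a locally Lipschitz `f`,
then from every initial condition there is a solution defined and bounded on all of
`[0,∞)`, and every forward solution satisfies `V(x(t)) ≤ V(x(0))` and is bounded. -/
theorem stmt_14 (n : ℕ) (f : EuclideanSpace ℝ (Fin n) → EuclideanSpace ℝ (Fin n))
    (V : EuclideanSpace ℝ (Fin n) → ℝ) (hf : LocallyLipschitz f)
    (hV : ContDiff ℝ 1 V)
    (h0 : V 0 = 0) (hpos : ∀ x ≠ 0, 0 < V x)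
    (hrad : Tendsto V (Filter.comap (fun x => ‖x‖) atTop) atTop)
    (hdec : ∀ x : EuclideanSpace ℝ (Fin n), fderiv ℝ V x (f x) ≤ 0) :
    (∀ x₀ : EuclideanSpace ℝ (Fin n), ∃ x : ℝ → EuclideanSpace ℝ (Fin n),
      x 0 = x₀ ∧ (∀ t ∈ Ici (0 : ℝ), HasDerivWithinAt x (f (x t)) (Ici 0) t) ∧
      (∃ C : ℝ, ∀ t ∈ Ici (0 : ℝ), ‖x t‖ ≤ C) ∧
      ∀ t ∈ Ici (0 : ℝ), V (x t) ≤ V x₀) ∧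
    ∀ (T : ℝ) (x : ℝ → EuclideanSpace ℝ (Fin n)),
      (∀ t ∈ Ico (0 : ℝ) T, HasDerivWithinAt x (f (x t)) (Ico 0 T) t) →
      (∃ C : ℝ, ∀ t ∈ Ico (0 : ℝ) T, ‖x t‖ ≤ C) ∧
      ∀ t ∈ Ico (0 : ℝ) T, V (x t) ≤ V (x 0) := by
  constructor
  · intro x₀
    obtain ⟨R₀, hR₀⟩ := sublevel_bound hrad (V x₀)
    have hR₀0 : 0 ≤ R₀ := le_trans (norm_nonneg x₀) (hR₀ x₀ le_rfl)
    have hScompact : IsCompact {y : EuclideanSpace ℝ (Fin n) | V y ≤ V x₀} := by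
      apply Metric.isCompact_of_isClosed_isBounded
      · exact isClosed_le hV.continuous continuous_const
      · exact Metric.isBounded_closedBall.subset
          (fun y hy => mem_closedBall_zero_iff.2 (hR₀ y hy))
    obtain ⟨ρ, hρ, L, hLip⟩ := unif_lip hf hScompact
    obtain ⟨C₀, hC₀⟩ := (isCompact_closedBall (0 : EuclideanSpace ℝ (Fin n))
      (R₀ + ρ)).exists_bound_of_continuousOn hf.continuous.continuousOn
    set C : ℝ := max C₀ 1 with hC
    have hC0 : 0 < C := lt_of_lt_of_le one_pos (le_max_right _ _)
    set ε : ℝ := ρ / C with hεdef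
    have hε : 0 < ε := div_pos hρ hC0
    -- one Picard-Lindelöf step from any sublevel point
    have hg : ∀ (p : EuclideanSpace ℝ (Fin n)) (t₀ : ℝ),
        ∃ y : ℝ → EuclideanSpace ℝ (Fin n), y t₀ = p ∧
          (V p ≤ V x₀ →
            ∀ t ∈ Icc t₀ (t₀ + ε), HasDerivWithinAt y (f (y t)) (Icc t₀ (t₀ + ε)) t) := by
      intro p t₀
      by_cases hp : V p ≤ V x₀
      · have hpl : IsPicardLindelof (fun _ y => f y) (tmin := t₀) (tmax := t₀ + ε)
            ⟨t₀, le_rfl, by linarith⟩ p ⟨ρ, hρ.le⟩ 0 ⟨C, hC0.le⟩ L :=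
          { lipschitzOnWith := fun t _ => hLip p hp
            continuousOn := fun y _ => continuousOn_const
            norm_le := fun t _ y hy => by
              have h1 : ‖p‖ ≤ R₀ := hR₀ p hp
              have h2 : dist y p ≤ ρ := mem_closedBall.1 hy
              have h3 : y ∈ closedBall (0 : EuclideanSpace ℝ (Fin n)) (R₀ + ρ) := by
                rw [mem_closedBall, dist_eq_norm, sub_zero]
                calc ‖y‖ = ‖y - p + p‖ := by simp
                  _ ≤ ‖y - p‖ + ‖p‖ := norm_add_le _ _
                  _ ≤ ρ + R₀ := by
                      have := dist_eq_norm y p ▸ h2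
                      linarith
                  _ = R₀ + ρ := by ring
              exact le_trans (hC₀ y h3) (le_max_left _ _)
            mul_max_le := by
              show C * max (t₀ + ε - t₀) (t₀ - t₀) ≤ ρ - ((0 : NNReal) : ℝ)
              have h1 : max (t₀ + ε - t₀) (t₀ - t₀) = ε := by
                rw [add_sub_cancel_left, sub_self, max_eq_left hε.le]
              rw [NNReal.coe_zero, sub_zero, h1, hεdef, mul_div_cancel₀ _ (ne_of_gt hC0)] }
        obtain ⟨y, hy0, hyd⟩ := hpl.exists_eq_forall_mem_Icc_hasDerivWithinAt₀
        exact ⟨y, hy0, fun _ => hyd⟩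
      · exact ⟨fun _ => p, rfl, fun h => absurd h hp⟩
    choose g hg1 hg2 using hg
    have hgdec : ∀ p t₀, V p ≤ V x₀ → ∀ t ∈ Icc t₀ (t₀ + ε), V (g p t₀ t) ≤ V p := by
      intro p t₀ hp t ht
      have hmono := lyap_le hV hdec (convex_Icc t₀ (t₀ + ε)) (hg2 p t₀ hp)
      have h2 := hmono (Set.left_mem_Icc.2 (by linarith)) ht ht.1
      simpa [hg1] using h2
    -- the iterated solution pieces
    set sol : ℕ → ℝ → EuclideanSpace ℝ (Fin n) := fun k => Nat.rec (g x₀ 0)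
      (fun k y => g (y (((k + 1 : ℕ) : ℝ) * ε)) (((k + 1 : ℕ) : ℝ) * ε)) k with hsoldef
    have hsol0 : sol 0 = g x₀ 0 := rfl
    have hsolS : ∀ k : ℕ,
        sol (k + 1) = g (sol k (((k + 1 : ℕ) : ℝ) * ε)) (((k + 1 : ℕ) : ℝ) * ε) := fun k => rfl
    have H : ∀ k : ℕ, V (sol k ((k : ℝ) * ε)) ≤ V x₀ ∧
        (∀ t ∈ Icc ((k : ℝ) * ε) ((k : ℝ) * ε + ε),
          HasDerivWithinAt (sol k) (f (sol k t)) (Icc ((k : ℝ) * ε) ((k : ℝ) * ε + ε)) t) ∧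
        (∀ t ∈ Icc ((k : ℝ) * ε) ((k : ℝ) * ε + ε), V (sol k t) ≤ V x₀) := by
      intro k
      induction k with
      | zero =>
        have e0 : ((0 : ℕ) : ℝ) * ε = 0 := by norm_num
        rw [hsol0]
        refine ⟨?_, ?_, ?_⟩
        · rw [e0, hg1]
        · rw [e0]
          simpa using hg2 x₀ 0 le_rfl
        · rw [e0]
          intro t ht
          simp only [zero_add] at ht
          exact hgdec x₀ 0 le_rfl t (by simpa using ht)
      | succ k ih =>
        have hcast : ((k + 1 : ℕ) : ℝ) * ε = (k : ℝ) * ε + ε := by push_cast; ring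
        have hp : V (sol k (((k + 1 : ℕ) : ℝ) * ε)) ≤ V x₀ := by
          apply ih.2.2
          rw [hcast]
          exact ⟨by linarith, le_rfl⟩
        rw [hsolS k]
        refine ⟨?_, ?_, ?_⟩
        · rw [hg1]
          exact hp
        · exact hg2 _ _ hp
        · intro t ht
          exact le_trans (hgdec _ _ hp t ht) hp
    have hcons : ∀ k : ℕ, sol (k + 1) (((k + 1 : ℕ) : ℝ) * ε) = sol k (((k + 1 : ℕ) : ℝ) * ε) := by
      intro k
      rw [hsolS k, hg1]
    -- the glued solution
    set x : ℝ → EuclideanSpace ℝ (Fin n) := fun t => sol ⌊t / ε⌋₊ t with hxdef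
    have hfloor : ∀ (k : ℕ) (t : ℝ), (k : ℝ) * ε ≤ t → t < (k : ℝ) * ε + ε → ⌊t / ε⌋₊ = k := by
      intro k t h1 h2
      have ht0 : 0 ≤ t := le_trans (by positivity) h1
      rw [Nat.floor_eq_iff (div_nonneg ht0 hε.le)]
      constructor
      · rw [le_div_iff₀ hε]
        linarith
      · rw [div_lt_iff₀ hε]
        push_cast
        linarith
    have hEqOn : ∀ k : ℕ, ∀ t ∈ Icc ((k : ℝ) * ε) ((k : ℝ) * ε + ε), x t = sol k t := by
      intro k t ht
      rcases lt_or_eq_of_le ht.2 with h2 | h2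
      · rw [hxdef]
        simp only
        rw [hfloor k t ht.1 h2]
      · have hcast : ((k + 1 : ℕ) : ℝ) * ε = (k : ℝ) * ε + ε := by push_cast; ring
        have hfl : ⌊t / ε⌋₊ = k + 1 := by
          apply hfloor (k + 1) t
          · rw [hcast]; linarith
          · rw [hcast]; linarith [hε]
        rw [hxdef]
        simp only
        rw [hfl, h2, ← hcast, hcons k]
    have hmemIcc : ∀ t : ℝ, 0 ≤ t →
        (⌊t / ε⌋₊ : ℝ) * ε ≤ t ∧ t < (⌊t / ε⌋₊ : ℝ) * ε + ε := by
      intro t ht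
      have h1 : (⌊t / ε⌋₊ : ℝ) ≤ t / ε := Nat.floor_le (div_nonneg ht hε.le)
      have h2 : t / ε < ⌊t / ε⌋₊ + 1 := Nat.lt_floor_add_one _
      constructor
      · calc (⌊t / ε⌋₊ : ℝ) * ε ≤ (t / ε) * ε := by nlinarith
          _ = t := by field_simp
      · have := (div_lt_iff₀ hε).1 h2
        linarith
    have hVx : ∀ t : ℝ, 0 ≤ t → V (x t) ≤ V x₀ := by
      intro t ht
      obtain ⟨h1, h2⟩ := hmemIcc t ht
      rw [hEqOn ⌊t / ε⌋₊ t ⟨h1, h2.le⟩]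
      exact (H ⌊t / ε⌋₊).2.2 t ⟨h1, h2.le⟩
    refine ⟨x, ?_, ?_, ⟨R₀, fun t ht => hR₀ _ (hVx t ht)⟩, fun t ht => hVx t ht⟩
    · have : ⌊(0 : ℝ) / ε⌋₊ = 0 := by simp
      rw [hxdef]
      simp only
      rw [this, hsol0, hg1]
    · intro t ht
      have ht' : (0 : ℝ) ≤ t := ht
      obtain ⟨hk1, hk2⟩ := hmemIcc t ht'
      have hxt : x t = sol ⌊t / ε⌋₊ t := hEqOn _ t ⟨hk1, hk2.le⟩
      have hIcc : HasDerivWithinAt x (f (x t))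
          (Icc ((⌊t / ε⌋₊ : ℝ) * ε) ((⌊t / ε⌋₊ : ℝ) * ε + ε)) t := by
        rw [hxt]
        exact ((H _).2.1 t ⟨hk1, hk2.le⟩).congr (fun y hy => hEqOn _ y hy) hxt
      rcases eq_or_lt_of_le hk1 with heq | hlt
      · cases hK : ⌊t / ε⌋₊ with
        | zero =>
          rw [hK] at heq hIcc
          have ht0 : t = 0 := by rw [← heq]; push_cast; ring
          subst ht0
          rw [show ((0 : ℕ) : ℝ) * ε = 0 by push_cast; ring] at hIcc
          refine hIcc.mono_of_mem_nhdsWithin ?_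
          rw [zero_add]
          exact Icc_mem_nhdsGE_of_mem ⟨le_rfl, hε⟩
        | succ j =>
          rw [hK] at heq hIcc
          have hcast : ((j + 1 : ℕ) : ℝ) * ε = (j : ℝ) * ε + ε := by push_cast; ring
          have htj : t ∈ Icc ((j : ℝ) * ε) ((j : ℝ) * ε + ε) := by
            rw [← heq, hcast]; exact ⟨by linarith, le_rfl⟩
          have hxtj : x t = sol j t := hEqOn j t htj
          have hIccj : HasDerivWithinAt x (f (x t)) (Icc ((j : ℝ) * ε) ((j : ℝ) * ε + ε)) t := by
            rw [hxtj]
            exact ((H j).2.1 t htj).congr (fun y hy => hEqOn j y hy) hxtj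
          rw [hcast] at hIcc
          have hu := hIccj.union hIcc
          rw [Icc_union_Icc_eq_Icc (by linarith : (j : ℝ) * ε ≤ (j : ℝ) * ε + ε)
            (by linarith : (j : ℝ) * ε + ε ≤ (j : ℝ) * ε + ε + ε)] at hu
          have h1 : (j : ℝ) * ε < t := by rw [← heq, hcast]; linarith
          have h2 : t < (j : ℝ) * ε + ε + ε := by rw [← heq, hcast]; linarith
          exact (hu.hasDerivAt (Icc_mem_nhds h1 h2)).hasDerivWithinAt
      · exact (hIcc.hasDerivAt (Icc_mem_nhds hlt (by linarith))).hasDerivWithinAt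
  · intro T x hx
    have hmono := lyap_le hV hdec (convex_Ico (0:ℝ) T) hx
    have hVle : ∀ t ∈ Ico (0 : ℝ) T, V (x t) ≤ V (x 0) := by
      intro t ht
      exact hmono ⟨le_rfl, lt_of_le_of_lt ht.1 ht.2⟩ ht ht.1
    obtain ⟨R, hR⟩ := sublevel_bound hrad (V (x 0))
    exact ⟨⟨R, fun t ht => hR _ (hVle t ht)⟩, hVle⟩
end

section
/- For the NDBWMCM, define Q(R,Y,Z,W) = απ₁|Y|^{p−1}Y + α_cπ₁|Z|^{p−1}Z + W, h(R,Y,Z,W) = α|Y|^{p−1}Y + α_c|Z|^{p−1}Z, and 𝒱 = (R + π₁Q)² + Q²/2 + (α/(p+1))|Y|^{p+1} + (α_c/((p+1)A))|Z|^{p+1}. Then the derivative of 𝒱 along the NDBWMCM vector field equals −π₁h² − α_c|Z|^{p+n−1}(π₂|Z||W| + π₃ZW), and this quantity is ≤ 0 for all (R,Y,Z,W) ∈ ℝ⁴. -/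
open Real


lemma phi_hasDerivAt {c : ℝ} (hc : c = 0 ∨ 1 ≤ c) (x : ℝ) :
    HasDerivAt (fun t : ℝ => |t| ^ c * t) ((c + 1) * |x| ^ c) x := by
  rcases hc with rfl | hc
  · have : (fun t : ℝ => |t| ^ (0:ℝ) * t) = fun t => t := by
      funext t; rw [Real.rpow_zero, one_mul]
    rw [this, Real.rpow_zero]
    norm_num
    exact hasDerivAt_id x
  have hc0 : 0 < c := by linarith
  rcases lt_trichotomy x 0 with hx | rfl | hx
  · have hne : -x ≠ 0 := neg_ne_zero.mpr hx.ne
    have h1 : HasDerivAt (fun t : ℝ => (-t) ^ c) (c * (-x) ^ (c - 1) * (-1)) x :=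
      (Real.hasDerivAt_rpow_const (Or.inl hne)).comp x (hasDerivAt_neg x)
    have h2 : HasDerivAt (fun t : ℝ => (-t) ^ c * t)
        ((c * (-x) ^ (c - 1) * (-1)) * x + (-x) ^ c * 1) x := h1.mul (hasDerivAt_id x)
    have heq : (fun t : ℝ => (-t) ^ c * t) =ᶠ[nhds x] fun t => |t| ^ c * t := by
      filter_upwards [Iio_mem_nhds hx] with t ht
      rw [abs_of_neg ht]
    have h3 := h2.congr_of_eventuallyEq heq.symm
    refine h3.congr_deriv ?_
    rw [abs_of_neg hx]
    have hkey : (-x) ^ (c - 1) * (-x) = (-x) ^ c := by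
      rw [← Real.rpow_add_one hne]; ring_nf
    nlinarith [hkey]
  · rw [hasDerivAt_iff_tendsto_slope]
    have habs : |(0:ℝ)| ^ c = 0 := by simp [Real.zero_rpow hc0.ne']
    rw [habs, mul_zero]
    have hcont : ContinuousAt (fun t : ℝ => |t| ^ c) 0 :=
      ContinuousAt.comp (by
          show ContinuousAt (fun x : ℝ => x ^ c) |(0:ℝ)|
          simpa using Real.continuousAt_rpow_const 0 c (Or.inr hc0.le))
        continuous_abs.continuousAt
    have htd := hcont.tendsto
    rw [habs] at htd
    refine Filter.Tendsto.congr' ?_ (htd.mono_left nhdsWithin_le_nhds)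
    filter_upwards [self_mem_nhdsWithin] with t ht
    simp only [Set.mem_compl_iff, Set.mem_singleton_iff] at ht
    rw [slope_def_field]
    field_simp
    simp
  · have hne : x ≠ 0 := hx.ne'
    have h1 : HasDerivAt (fun t : ℝ => t ^ c * t)
        ((c * x ^ (c - 1)) * x + x ^ c * 1) x :=
      (Real.hasDerivAt_rpow_const (Or.inl hne)).mul (hasDerivAt_id x)
    have heq : (fun t : ℝ => t ^ c * t) =ᶠ[nhds x] fun t => |t| ^ c * t := by
      filter_upwards [Ioi_mem_nhds hx] with t ht
      rw [abs_of_pos ht]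
    have h3 := h1.congr_of_eventuallyEq heq.symm
    refine h3.congr_deriv ?_
    rw [abs_of_pos hx]
    have hkey : x ^ (c - 1) * x = x ^ c := by
      rw [← Real.rpow_add_one hne]; ring_nf
    nlinarith [hkey]

lemma psi_hasDerivAt {p : ℝ} (hp : p = 1 ∨ 2 ≤ p) (x : ℝ) :
    HasDerivAt (fun t : ℝ => |t| ^ (p + 1)) ((p - 1 + 1 + 1) * (|x| ^ (p - 1) * x)) x := by
  have hc : p - 1 = 0 ∨ 1 ≤ p - 1 := by
    rcases hp with h | h
    exacts [Or.inl (by linarith), Or.inr (by linarith)]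
  have h1 : HasDerivAt (fun t : ℝ => t * (|t| ^ (p - 1) * t))
      (1 * (|x| ^ (p - 1) * x) + x * ((p - 1 + 1) * |x| ^ (p - 1))) x :=
    (hasDerivAt_id x).mul (phi_hasDerivAt hc x)
  have heq : (fun t : ℝ => t * (|t| ^ (p - 1) * t)) = fun t : ℝ => |t| ^ (p + 1) := by
    funext t
    rcases eq_or_ne t 0 with rfl | ht
    · have : (0:ℝ) < p + 1 := by rcases hp with h | h <;> linarith
      simp [Real.zero_rpow this.ne']
    · have ht' : 0 < |t| := abs_pos.mpr ht
      have h2 : t * (|t| ^ (p - 1) * t) = |t| ^ (p - 1) * |t| * |t| := by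
        rw [mul_assoc, abs_mul_abs_self]; ring
      rw [h2, ← Real.rpow_add_one ht'.ne', ← Real.rpow_add_one ht'.ne']
      norm_num
  rw [heq] at h1
  convert h1 using 1
  have : x * ((p - 1 + 1) * |x| ^ (p - 1)) = (p - 1 + 1) * (|x| ^ (p - 1) * x) := by ring
  rw [this]; ring


lemma alg_main (π₁ π₂ π₃ A α p n r y z w u v m k s az aw : ℝ)
    (F1 : v * m * (z * z) = s * az) (F2 : v * k * z = s * z)
    (G1 : α / (p + 1) * (p - 1 + 1 + 1) = α)
    (G2 : (1 - α) / ((p + 1) * A) * ((p - 1 + 1 + 1) * A) = 1 - α)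
    (G3 : 1 / π₁ * π₁ = 1) :
    (r + π₁ * (α * π₁ * (u * y) + (1 - α) * π₁ * (v * z) + w)) *
              (α * π₁ * u * y + (1 - α) * π₁ * v * z +
                π₁ *
                  (α * π₁ * ((p - 1 + 1) * u * w) +
                      (1 - α) * π₁ *
                        ((p - 1 + 1) * v *
                          (A *
                            (w - π₂ * m * z * aw -
                              π₃ * k * w))) +
                    (-(1 / π₁) * (α * π₁ * u * y + (1 - α) * π₁ * v * z) -
                        α * p * π₁ * u * w -
                      (1 - α) * p * π₁ * v *
                        (A *
                          (w - π₂ * m * z * aw -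
                            π₃ * k * w))))) +
            (r +
                π₁ *
                  (α * π₁ * (u * y) + (1 - α) * π₁ * (v * z) + w)) *
              (α * π₁ * u * y + (1 - α) * π₁ * v * z +
                π₁ *
                  (α * π₁ * ((p - 1 + 1) * u * w) +
                      (1 - α) * π₁ *
                        ((p - 1 + 1) * v *
                          (A *
                            (w - π₂ * m * z * aw -
                              π₃ * k * w))) +
                    (-(1 / π₁) * (α * π₁ * u * y + (1 - α) * π₁ * v * z) -
                        α * p * π₁ * u * w -
                      (1 - α) * p * π₁ * v *
                        (A *
                          (w - π₂ * m * z * aw -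
                            π₃ * k * w))))) +
          1 / 2 *
            ((α * π₁ * (u * y) + (1 - α) * π₁ * (v * z) + w) *
                (α * π₁ * ((p - 1 + 1) * u * w) +
                    (1 - α) * π₁ *
                      ((p - 1 + 1) * v *
                        (A *
                          (w - π₂ * m * z * aw - π₃ * k * w))) +
                  (-(1 / π₁) * (α * π₁ * u * y + (1 - α) * π₁ * v * z) -
                      α * p * π₁ * u * w -
                    (1 - α) * p * π₁ * v *
                      (A *
                        (w - π₂ * m * z * aw - π₃ * k * w)))) +
              (α * π₁ * (u * y) + (1 - α) * π₁ * (v * z) + w) *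
                (α * π₁ * ((p - 1 + 1) * u * w) +
                    (1 - α) * π₁ *
                      ((p - 1 + 1) * v *
                        (A *
                          (w - π₂ * m * z * aw - π₃ * k * w))) +
                  (-(1 / π₁) * (α * π₁ * u * y + (1 - α) * π₁ * v * z) -
                      α * p * π₁ * u * w -
                    (1 - α) * p * π₁ * v *
                      (A *
                        (w - π₂ * m * z * aw - π₃ * k * w))))) +
        α / (p + 1) * ((p - 1 + 1 + 1) * (u * y) * w) +
      (1 - α) / ((p + 1) * A) *
        ((p - 1 + 1 + 1) * (v * z) *
          (A * (w - π₂ * m * z * aw - π₃ * k * w))) =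
    -π₁ * (α * u * y + (1 - α) * v * z) ^ 2 -
      (1 - α) * s * (π₂ * az * aw + π₃ * z * w)
 := by
  linear_combination (-(1 - α) * π₂ * aw) * F1 + (-(1 - α) * π₃ * w) * F2
    + (u * y * w) * G1
    + (v * z * (w - π₂ * m * z * aw - π₃ * k * w)) * G2
    + (-(2 * (r + π₁ * (α * π₁ * (u * y) + (1 - α) * π₁ * (v * z) + w)) * π₁
        + (α * π₁ * (u * y) + (1 - α) * π₁ * (v * z) + w))
        * (α * u * y + (1 - α) * v * z)) * G3

/-- The derivative of the NDBWMCM Lyapunov function `𝒱` along the NDBWMCM vector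
field equals `−π₁h² − α_c|Z|^{p+n−1}(π₂|Z||W| + π₃ZW)`, which is nonpositive. -/
theorem stmt_17 (π₁ π₂ π₃ n p A α : ℝ)
    (hπ₁ : 0 < π₁) (hπ₂ : 0 < π₂) (hπ₃₁ : -π₂ < π₃) (hπ₃₂ : π₃ < π₂)
    (hn : 1 ≤ n) (hp : p = 1 ∨ 2 ≤ p) (hA : 0 < A) (hα₀ : 0 < α) (hα₁ : α < 1)
    (Q h : ℝ × ℝ × ℝ × ℝ → ℝ)
    (hQ : ∀ q : ℝ × ℝ × ℝ × ℝ, Q q =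
      α * π₁ * |q.2.1| ^ (p - 1) * q.2.1 + (1 - α) * π₁ * |q.2.2.1| ^ (p - 1) * q.2.2.1
        + q.2.2.2)
    (hh : ∀ q : ℝ × ℝ × ℝ × ℝ, h q =
      α * |q.2.1| ^ (p - 1) * q.2.1 + (1 - α) * |q.2.2.1| ^ (p - 1) * q.2.2.1)
    (𝒱 : ℝ × ℝ × ℝ × ℝ → ℝ)
    (h𝒱 : ∀ q : ℝ × ℝ × ℝ × ℝ, 𝒱 q =
      (q.1 + π₁ * Q q) ^ (2 : ℕ) + Q q ^ (2 : ℕ) / 2 + α / (p + 1) * |q.2.1| ^ (p + 1)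
        + (1 - α) / ((p + 1) * A) * |q.2.2.1| ^ (p + 1))
    (f : ℝ × ℝ × ℝ × ℝ → ℝ × ℝ × ℝ × ℝ)
    (hf : ∀ q : ℝ × ℝ × ℝ × ℝ, f q =
      (α * π₁ * |q.2.1| ^ (p - 1) * q.2.1 + (1 - α) * π₁ * |q.2.2.1| ^ (p - 1) * q.2.2.1,
       q.2.2.2,
       A * (q.2.2.2 - π₂ * |q.2.2.1| ^ (n - 1) * q.2.2.1 * |q.2.2.2|
         - π₃ * |q.2.2.1| ^ n * q.2.2.2),
       -(1 / π₁) * (α * π₁ * |q.2.1| ^ (p - 1) * q.2.1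
           + (1 - α) * π₁ * |q.2.2.1| ^ (p - 1) * q.2.2.1)
         - α * p * π₁ * |q.2.1| ^ (p - 1) * q.2.2.2
         - (1 - α) * p * π₁ * |q.2.2.1| ^ (p - 1)
           * (A * (q.2.2.2 - π₂ * |q.2.2.1| ^ (n - 1) * q.2.2.1 * |q.2.2.2|
             - π₃ * |q.2.2.1| ^ n * q.2.2.2)))) :
    ∀ q : ℝ × ℝ × ℝ × ℝ,
      fderiv ℝ 𝒱 q (f q)
        = -π₁ * h q ^ (2 : ℕ)
            - (1 - α) * |q.2.2.1| ^ (p + n - 1)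
              * (π₂ * |q.2.2.1| * |q.2.2.2| + π₃ * q.2.2.1 * q.2.2.2) ∧
      -π₁ * h q ^ (2 : ℕ)
          - (1 - α) * |q.2.2.1| ^ (p + n - 1)
            * (π₂ * |q.2.2.1| * |q.2.2.2| + π₃ * q.2.2.1 * q.2.2.2) ≤ 0 := by
  have hc : p - 1 = 0 ∨ 1 ≤ p - 1 := by
    rcases hp with h' | h'
    exacts [Or.inl (by linarith), Or.inr (by linarith)]
  have hp1 : p + 1 ≠ 0 := by rcases hp with h' | h' <;> intro hcon <;> linarith
  intro q
  constructor
  · -- fderiv computation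
    have hVeq : 𝒱 = fun q => (q.1 + π₁ * (α * π₁ * (|q.2.1| ^ (p - 1) * q.2.1) + (1 - α) * π₁ * (|q.2.2.1| ^ (p - 1) * q.2.2.1) + q.2.2.2)) * (q.1 + π₁ * (α * π₁ * (|q.2.1| ^ (p - 1) * q.2.1) + (1 - α) * π₁ * (|q.2.2.1| ^ (p - 1) * q.2.2.1) + q.2.2.2)) + (1/2 : ℝ) * ((α * π₁ * (|q.2.1| ^ (p - 1) * q.2.1) + (1 - α) * π₁ * (|q.2.2.1| ^ (p - 1) * q.2.2.1) + q.2.2.2) * (α * π₁ * (|q.2.1| ^ (p - 1) * q.2.1) + (1 - α) * π₁ * (|q.2.2.1| ^ (p - 1) * q.2.2.1) + q.2.2.2))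
        + α / (p + 1) * |q.2.1| ^ (p + 1) + (1 - α) / ((p + 1) * A) * |q.2.2.1| ^ (p + 1) := by
      funext q
      rw [h𝒱 q, hQ q]
      ring_nf
    -- coordinate derivatives
    have hYd : HasFDerivAt (fun q : ℝ × ℝ × ℝ × ℝ => q.2.1)
        ((ContinuousLinearMap.fst ℝ ℝ (ℝ × ℝ)).comp (ContinuousLinearMap.snd ℝ ℝ (ℝ × ℝ × ℝ))) q :=
      hasFDerivAt_fst.comp q hasFDerivAt_snd
    have hZd : HasFDerivAt (fun q : ℝ × ℝ × ℝ × ℝ => q.2.2.1)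
        ((ContinuousLinearMap.fst ℝ ℝ ℝ).comp ((ContinuousLinearMap.snd ℝ ℝ (ℝ × ℝ)).comp
          (ContinuousLinearMap.snd ℝ ℝ (ℝ × ℝ × ℝ)))) q :=
      hasFDerivAt_fst.comp q (hasFDerivAt_snd.comp q hasFDerivAt_snd)
    have hWd : HasFDerivAt (fun q : ℝ × ℝ × ℝ × ℝ => q.2.2.2)
        ((ContinuousLinearMap.snd ℝ ℝ ℝ).comp ((ContinuousLinearMap.snd ℝ ℝ (ℝ × ℝ)).comp
          (ContinuousLinearMap.snd ℝ ℝ (ℝ × ℝ × ℝ)))) q :=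
      hasFDerivAt_snd.comp q (hasFDerivAt_snd.comp q hasFDerivAt_snd)
    have hφY := (phi_hasDerivAt hc q.2.1).comp_hasFDerivAt q hYd
    have hφZ := (phi_hasDerivAt hc q.2.2.1).comp_hasFDerivAt q hZd
    have hψY := (psi_hasDerivAt hp q.2.1).comp_hasFDerivAt q hYd
    have hψZ := (psi_hasDerivAt hp q.2.2.1).comp_hasFDerivAt q hZd
    have hQFd := ((hφY.const_mul (α * π₁)).add (hφZ.const_mul ((1 - α) * π₁))).add hWd
    have hT1 := hasFDerivAt_fst.add (hQFd.const_mul π₁)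
    have hVd := ((hT1.mul hT1).add ((hQFd.mul hQFd).const_mul (1/2 : ℝ))).add
        (hψY.const_mul (α / (p + 1))) |>.add
        (hψZ.const_mul ((1 - α) / ((p + 1) * A)))
    have key : fderiv ℝ (fun q : ℝ × ℝ × ℝ × ℝ =>
        (q.1 + π₁ * (α * π₁ * (|q.2.1| ^ (p - 1) * q.2.1) + (1 - α) * π₁ * (|q.2.2.1| ^ (p - 1) * q.2.2.1) + q.2.2.2)) * (q.1 + π₁ * (α * π₁ * (|q.2.1| ^ (p - 1) * q.2.1) + (1 - α) * π₁ * (|q.2.2.1| ^ (p - 1) * q.2.2.1) + q.2.2.2)) + (1/2 : ℝ) * ((α * π₁ * (|q.2.1| ^ (p - 1) * q.2.1) + (1 - α) * π₁ * (|q.2.2.1| ^ (p - 1) * q.2.2.1) + q.2.2.2) * (α * π₁ * (|q.2.1| ^ (p - 1) * q.2.1) + (1 - α) * π₁ * (|q.2.2.1| ^ (p - 1) * q.2.2.1) + q.2.2.2))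
        + α / (p + 1) * |q.2.1| ^ (p + 1) + (1 - α) / ((p + 1) * A) * |q.2.2.1| ^ (p + 1)) q = _ :=
      hVd.fderiv
    rw [hVeq, key]
    rw [hf q, hh q]
    simp only [ContinuousLinearMap.add_apply, ContinuousLinearMap.coe_smul',
      Pi.smul_apply, ContinuousLinearMap.coe_comp', Function.comp_apply,
      ContinuousLinearMap.coe_fst', ContinuousLinearMap.coe_snd', smul_eq_mul]
    refine alg_main π₁ π₂ π₃ A α p n q.1 q.2.1 q.2.2.1 q.2.2.2 (|q.2.1| ^ (p - 1))
      (|q.2.2.1| ^ (p - 1)) (|q.2.2.1| ^ (n - 1)) (|q.2.2.1| ^ n) (|q.2.2.1| ^ (p + n - 1))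
      (|q.2.2.1|) (|q.2.2.2|) ?_ ?_ ?_ ?_ ?_
    · rcases eq_or_ne q.2.2.1 0 with hz | hz
      · simp [hz]
      · have hz' : 0 < |q.2.2.1| := abs_pos.mpr hz
        rw [← abs_mul_abs_self q.2.2.1, show p + n - 1 = p - 1 + (n - 1) + 1 by ring,
          Real.rpow_add hz', Real.rpow_add hz', Real.rpow_one]
        ring
    · rcases eq_or_ne q.2.2.1 0 with hz | hz
      · simp [hz]
      · have hz' : 0 < |q.2.2.1| := abs_pos.mpr hz
        rw [show p + n - 1 = p - 1 + n by ring, Real.rpow_add hz']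
    · rw [show p - 1 + 1 + 1 = p + 1 by ring, div_mul_cancel₀ _ hp1]
    · rw [show p - 1 + 1 + 1 = p + 1 by ring]
      field_simp
    · field_simp
  · -- nonpositivity
    have h1 : (0:ℝ) ≤ |q.2.2.1| ^ (p + n - 1) := Real.rpow_nonneg (abs_nonneg _) _
    have e1 : q.2.2.1 * q.2.2.2 ≤ |q.2.2.1| * |q.2.2.2| := by
      rw [← abs_mul]; exact le_abs_self _
    have e2 : -(|q.2.2.1| * |q.2.2.2|) ≤ q.2.2.1 * q.2.2.2 := by
      rw [← abs_mul]; exact neg_abs_le _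
    have t1 : (0:ℝ) ≤ (π₂ + π₃) * (|q.2.2.1| * |q.2.2.2| + q.2.2.1 * q.2.2.2) :=
      mul_nonneg (by linarith) (by linarith)
    have t2 : (0:ℝ) ≤ (π₂ - π₃) * (|q.2.2.1| * |q.2.2.2| - q.2.2.1 * q.2.2.2) :=
      mul_nonneg (by linarith) (by linarith)
    have h2 : (0:ℝ) ≤ π₂ * |q.2.2.1| * |q.2.2.2| + π₃ * q.2.2.1 * q.2.2.2 := by nlinarith
    have h3 : (0:ℝ) ≤ (1 - α) * |q.2.2.1| ^ (p + n - 1)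
        * (π₂ * |q.2.2.1| * |q.2.2.2| + π₃ * q.2.2.1 * q.2.2.2) :=
      mul_nonneg (mul_nonneg (by linarith) h1) h2
    nlinarith [mul_nonneg hπ₁.le (sq_nonneg (h q))]
end

section
/- For the NDBWMCM with parameters π₁, π₂ > 0, π₃ ∈ (−π₂, π₂), n ≥ 1, p ∈ {1} ∪ [2,∞), A > 0, α ∈ (0,1), α_c = 1−α, the zero set of 𝒱̇(R,Y,Z,W) = −π₁(α|Y|^{p−1}Y + α_c|Z|^{p−1}Z)² − α_c|Z|^{p+n−1}(π₂|Z||W| + π₃ZW) equals 𝒰₁ ∪ 𝒰₂, where 𝒰₁ = {(R,0,0,W) : R,W ∈ ℝ} and 𝒰₂ = {(R, Y, −(α/α_c)^{1/p}Y, 0) : R,Y ∈ ℝ}. -/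
open Real

private lemma g_nonneg_eq {p : ℝ} (hp : 0 < p) {x : ℝ} (hx : 0 ≤ x) :
    |x| ^ (p - 1) * x = x ^ p := by
  rw [abs_of_nonneg hx]
  have : x ^ (p - 1 + 1) = x ^ (p - 1) * x := Real.rpow_add_one' hx (by linarith)
  simpa using this.symm

private lemma g_neg {x : ℝ} (p : ℝ) : |(-x)| ^ (p - 1) * (-x) = -(|x| ^ (p - 1) * x) := by
  rw [abs_neg]; ring

private lemma g_strictMono {p : ℝ} (hp : 0 < p) :
    StrictMono (fun x : ℝ => |x| ^ (p - 1) * x) := by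
  have key : ∀ a b : ℝ, 0 ≤ a → a < b → |a| ^ (p - 1) * a < |b| ^ (p - 1) * b := by
    intro a b ha hab
    rw [g_nonneg_eq hp ha, g_nonneg_eq hp (le_trans ha hab.le)]
    exact Real.rpow_lt_rpow ha hab hp
  intro a b hab
  show |a| ^ (p - 1) * a < |b| ^ (p - 1) * b
  rcases le_or_gt 0 a with ha | ha
  · exact key a b ha hab
  · rcases le_or_gt 0 b with hb | hb
    · have h1 : |a| ^ (p - 1) * a < 0 :=
        mul_neg_of_pos_of_neg (Real.rpow_pos_of_pos (abs_pos.2 ha.ne) _) ha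
      have h2 : (0:ℝ) ≤ |b| ^ (p - 1) * b :=
        mul_nonneg (Real.rpow_nonneg (abs_nonneg _) _) hb
      exact lt_of_lt_of_le h1 h2
    · have := key (-b) (-a) (by linarith) (by linarith)
      rw [g_neg, g_neg] at this
      linarith

private lemma g_mul {p : ℝ} (t x : ℝ) :
    |t * x| ^ (p - 1) * (t * x) = (|t| ^ (p - 1) * t) * (|x| ^ (p - 1) * x) := by
  rw [abs_mul, Real.mul_rpow (abs_nonneg _) (abs_nonneg _)]; ring

private lemma coeff_eq {p c : ℝ} (hp : 0 < p) (hc : 0 < c) :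
    |(-(c ^ ((1:ℝ)/p)))| ^ (p - 1) * (-(c ^ ((1:ℝ)/p))) = -c := by
  have hcp : (0:ℝ) < c ^ ((1:ℝ)/p) := Real.rpow_pos_of_pos hc _
  have h1 : (c ^ ((1:ℝ)/p)) ^ (p - 1) = c ^ ((1:ℝ)/p * (p - 1)) :=
    (Real.rpow_mul hc.le _ _).symm
  rw [abs_neg, abs_of_pos hcp, h1, mul_neg, ← Real.rpow_add hc,
    show (1:ℝ)/p * (p - 1) + 1/p = 1 by field_simp; ring, Real.rpow_one]

private lemma S_zero_iff {p α : ℝ} (hp : 0 < p) (hα₀ : 0 < α) (hα₁ : α < 1) (Y Z : ℝ) :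
    α * |Y| ^ (p - 1) * Y + (1 - α) * |Z| ^ (p - 1) * Z = 0 ↔
      Z = -(α / (1 - α)) ^ ((1:ℝ)/p) * Y := by
  have hαc : (0:ℝ) < 1 - α := by linarith
  have hcpos : 0 < α / (1 - α) := div_pos hα₀ hαc
  have hcα : (α / (1 - α)) * (1 - α) = α := by field_simp
  have hg : |(-(α / (1 - α)) ^ ((1:ℝ)/p)) * Y| ^ (p - 1) * ((-(α / (1 - α)) ^ ((1:ℝ)/p)) * Y)
      = -(α / (1 - α)) * (|Y| ^ (p - 1) * Y) := by
    rw [g_mul, coeff_eq hp hcpos]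
  constructor
  · intro h
    have h2 : |Z| ^ (p - 1) * Z
        = |(-(α / (1 - α)) ^ ((1:ℝ)/p)) * Y| ^ (p - 1) * ((-(α / (1 - α)) ^ ((1:ℝ)/p)) * Y) := by
      apply mul_left_cancel₀ (show (1 - α) ≠ 0 from hαc.ne')
      linear_combination h - (1 - α) * hg + (|Y| ^ (p - 1) * Y) * hcα
    exact (g_strictMono hp).injective h2
  · rintro rfl
    linear_combination (1 - α) * hg - (|Y| ^ (p - 1) * Y) * hcα

private lemma bracket_nonneg {π₂ π₃ : ℝ} (hπ₃₁ : -π₂ < π₃) (hπ₃₂ : π₃ < π₂) (Z W : ℝ) :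
    0 ≤ π₂ * |Z| * |W| + π₃ * Z * W := by
  have h1 : π₂ * |Z| * |W| = π₂ * |Z * W| := by rw [abs_mul]; ring
  have h4 : (0:ℝ) ≤ |Z * W| := abs_nonneg _
  rcases le_or_gt 0 π₃ with hs | hs
  · have t1 := mul_le_mul_of_nonneg_left (neg_abs_le (Z * W)) hs
    have t2 : 0 ≤ (π₂ - π₃) * |Z * W| := mul_nonneg (by linarith) h4
    nlinarith
  · have t1 := mul_le_mul_of_nonpos_left (le_abs_self (Z * W)) hs.le
    have t2 : 0 ≤ (π₂ + π₃) * |Z * W| := mul_nonneg (by linarith) h4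
    nlinarith

private lemma bracket_zero {π₂ π₃ : ℝ} (hπ₃₁ : -π₂ < π₃) (hπ₃₂ : π₃ < π₂) {Z W : ℝ}
    (h : π₂ * |Z| * |W| + π₃ * Z * W = 0) : Z = 0 ∨ W = 0 := by
  by_contra hc
  push_neg at hc
  have h1 : π₂ * |Z| * |W| = π₂ * |Z * W| := by rw [abs_mul]; ring
  have h4 : (0:ℝ) < |Z * W| := abs_pos.2 (mul_ne_zero hc.1 hc.2)
  rcases le_or_gt 0 π₃ with hs | hs
  · have t1 := mul_le_mul_of_nonneg_left (neg_abs_le (Z * W)) hs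
    have t2 : 0 < (π₂ - π₃) * |Z * W| := mul_pos (by linarith) h4
    nlinarith
  · have t1 := mul_le_mul_of_nonpos_left (le_abs_self (Z * W)) hs.le
    have t2 : 0 < (π₂ + π₃) * |Z * W| := mul_pos (by linarith) h4
    nlinarith

/-- Zero set of the NDBWMCM Lyapunov derivative: `𝒱̇(R,Y,Z,W) = 0` iff
`(R,Y,Z,W) ∈ 𝒰₁ ∪ 𝒰₂`, i.e. iff `Y = Z = 0` or (`Z = −(α/α_c)^{1/p}Y` and `W = 0`). -/
theorem stmt_18 (π₁ π₂ π₃ n p A α : ℝ)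
    (hπ₁ : 0 < π₁) (hπ₂ : 0 < π₂) (hπ₃₁ : -π₂ < π₃) (hπ₃₂ : π₃ < π₂)
    (hn : 1 ≤ n) (hp : p = 1 ∨ 2 ≤ p) (hA : 0 < A) (hα₀ : 0 < α) (hα₁ : α < 1) :
    ∀ R Y Z W : ℝ,
      (-π₁ * (α * |Y| ^ (p - 1) * Y + (1 - α) * |Z| ^ (p - 1) * Z) ^ (2 : ℕ)
          - (1 - α) * |Z| ^ (p + n - 1) * (π₂ * |Z| * |W| + π₃ * Z * W) = 0) ↔
        ((Y = 0 ∧ Z = 0) ∨ (Z = -(α / (1 - α)) ^ ((1 : ℝ) / p) * Y ∧ W = 0)) := by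
  have hp0 : 0 < p := by rcases hp with h | h <;> linarith
  have hαc : (0:ℝ) < 1 - α := by linarith
  have hexp : p + n - 1 ≠ 0 := by intro hq; linarith [hq.ge, hq.le]
  intro R Y Z W
  set S := α * |Y| ^ (p - 1) * Y + (1 - α) * |Z| ^ (p - 1) * Z with hS
  set B := π₂ * |Z| * |W| + π₃ * Z * W with hB
  have hBnn : 0 ≤ B := bracket_nonneg hπ₃₁ hπ₃₂ Z W
  have hEnn : 0 ≤ |Z| ^ (p + n - 1) := Real.rpow_nonneg (abs_nonneg _) _
  have hsplit : (-π₁ * S ^ (2:ℕ) - (1 - α) * |Z| ^ (p + n - 1) * B = 0) ↔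
      (S = 0 ∧ (Z = 0 ∨ W = 0)) := by
    constructor
    · intro h
      have hT : 0 ≤ (1 - α) * |Z| ^ (p + n - 1) * B :=
        mul_nonneg (mul_nonneg hαc.le hEnn) hBnn
      have hS2 : 0 ≤ π₁ * S ^ (2:ℕ) := mul_nonneg hπ₁.le (sq_nonneg S)
      have hP : π₁ * S ^ (2:ℕ) = 0 := by nlinarith
      have hSz : S = 0 := by
        have := (mul_eq_zero.1 hP).resolve_left hπ₁.ne'
        exact pow_eq_zero_iff (two_ne_zero) |>.1 this
      have hTz : (1 - α) * |Z| ^ (p + n - 1) * B = 0 := by nlinarith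
      refine ⟨hSz, ?_⟩
      rcases mul_eq_zero.1 hTz with h' | h'
      · rcases mul_eq_zero.1 h' with h'' | h''
        · linarith
        · exact Or.inl (abs_eq_zero.1 ((Real.rpow_eq_zero (abs_nonneg _) hexp).1 h''))
      · exact bracket_zero hπ₃₁ hπ₃₂ h'
    · rintro ⟨h1, h2⟩
      have hBz : |Z| ^ (p + n - 1) * B = 0 := by
        rcases h2 with h | h
        · rw [h]; simp [Real.zero_rpow hexp]
        · have : B = 0 := by rw [hB, h]; simp
          rw [this, mul_zero]
      linear_combination (-π₁ * S) * h1 - (1 - α) * hBz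
  rw [hsplit, S_zero_iff hp0 hα₀ hα₁ Y Z]
  have htne : -(α / (1 - α)) ^ ((1:ℝ)/p) ≠ 0 := by
    have : (0:ℝ) < (α / (1 - α)) ^ ((1:ℝ)/p) :=
      Real.rpow_pos_of_pos (div_pos hα₀ hαc) _
    linarith
  constructor
  · rintro ⟨h1, h2 | h2⟩
    · left
      refine ⟨?_, h2⟩
      rw [h2] at h1
      rcases mul_eq_zero.1 h1.symm with h | h
      · exact absurd h htne
      · exact h
    · right; exact ⟨h1, h2⟩
  · rintro (⟨h1, h2⟩ | ⟨h1, h2⟩)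
    · exact ⟨by rw [h1, h2, mul_zero], Or.inl h2⟩
    · exact ⟨h1, Or.inr h2⟩
end
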